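/- Let (Y,ν) be a probability space, q > 1, C > 0, δ > 0, and let F: Y × ℤ_{≥0} → ℝ be measurable with F(·,i) ∈ L²(ν) for each i, satisfying |∫_Y F(y,i)F(y,j) dν(y)| ≤ C·q^{−δ·min(i, j−i)} for all integers 0 ≤ i ≤ j. For s ∈ ℕ, let L_s be the collection of intervals [2^k·l, 2^k·(l+1)) ∩ ℤ_{≥0} with integers 0 ≤ k ≤ s−1 and 0 ≤ l ≤ 2^{s−k}−1. Then Σ_{[b,c) ∈ L_s} ∫_Y (Σ_{i=b}^{c−1} F(y,i))² dν(y) ≤ 4C·s·2^s/(1−q^{−δ}). -/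

import Mathlib

/-!
Write `r = q^{-δ} < 1`. Expanding the square, `∫ (∑_{i ∈ I} F_i)²` is the sum of the correlations
`∫ F_i F_j` over `i, j ∈ I`, each bounded by `C r^{min(i, |j - i|)} ≤ C (r^i + r^j + r^{|i - j|})`.
Every geometric series `∑_i r^i` is at most `(1 - r)⁻¹`, and `j ↦ |i - j|` is at most two-to-one,
so an interval of length `n` contributes at most `4 C n / (1 - r)`. Each of the `s` dyadic levels
covers `[0, 2^s)` exactly once, hence contributes at most `4 C 2^s / (1 - r)`.
-/

open MeasureTheory Finset

section GeometricSums

variable {r : ℝ}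

theorem sum_pow_le_inv_one_sub (h0 : 0 ≤ r) (h1 : r < 1) (t : Finset ℕ) :
    ∑ d ∈ t, r ^ d ≤ (1 - r)⁻¹ :=
  tsum_geometric_of_lt_one h0 h1 ▸
    (summable_geometric_of_lt_one h0 h1).sum_le_tsum t fun d _ => pow_nonneg h0 d

theorem sum_pow_dist_le (h0 : 0 ≤ r) (h1 : r < 1) (s : Finset ℕ) (i : ℕ) :
    ∑ j ∈ s, r ^ Nat.dist i j ≤ 2 * (1 - r)⁻¹ := by
  have below : ∑ j ∈ s with j ≤ i, r ^ Nat.dist i j ≤ (1 - r)⁻¹ :=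
    calc ∑ j ∈ s with j ≤ i, r ^ Nat.dist i j
        = ∑ j ∈ s with j ≤ i, r ^ (i - j) := sum_congr rfl fun j hj => by
          rw [Nat.dist_eq_sub_of_le_right (mem_filter.1 hj).2]
      _ = ∑ d ∈ (s.filter (· ≤ i)).image (i - ·), r ^ d := (sum_image fun a ha b hb h => by
          simp only [coe_filter, Set.mem_ofPred_eq] at ha hb h; omega).symm
      _ ≤ (1 - r)⁻¹ := sum_pow_le_inv_one_sub h0 h1 _
  have above : ∑ j ∈ s with ¬j ≤ i, r ^ Nat.dist i j ≤ (1 - r)⁻¹ :=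
    calc ∑ j ∈ s with ¬j ≤ i, r ^ Nat.dist i j
        = ∑ j ∈ s with ¬j ≤ i, r ^ (j - i) := sum_congr rfl fun j hj => by
          rw [Nat.dist_eq_sub_of_le (le_of_not_ge (mem_filter.1 hj).2)]
      _ = ∑ d ∈ (s.filter (¬· ≤ i)).image (· - i), r ^ d := (sum_image fun a ha b hb h => by
          simp only [coe_filter, Set.mem_ofPred_eq] at ha hb h; omega).symm
      _ ≤ (1 - r)⁻¹ := sum_pow_le_inv_one_sub h0 h1 _
  rw [← sum_filter_add_sum_filter_not s (· ≤ i), two_mul]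
  exact add_le_add below above

end GeometricSums

theorem pow_min_le_pow_add_pow_add_pow_dist {r : ℝ} (h0 : 0 ≤ r) {i j : ℕ} (hij : i ≤ j) :
    r ^ min i (j - i) ≤ r ^ i + r ^ j + r ^ Nat.dist i j := by
  rw [Nat.dist_eq_sub_of_le hij]
  have := pow_nonneg h0 i; have := pow_nonneg h0 j; have := pow_nonneg h0 (j - i)
  rcases min_choice i (j - i) with h | h <;> rw [h] <;> linarith

theorem integral_sq_sum_eq_sum_sum_integral_mul {Y ι : Type*} [MeasurableSpace Y] {μ : Measure Y}
    {f : ι → Y → ℝ} (hf : ∀ i, MemLp (f i) 2 μ) (s : Finset ι) :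
    ∫ y, (∑ i ∈ s, f i y) ^ 2 ∂μ = ∑ i ∈ s, ∑ j ∈ s, ∫ y, f i y * f j y ∂μ := by
  have hint : ∀ i j, Integrable (fun y => f i y * f j y) μ := fun i j =>
    (hf i).integrable_mul (hf j)
  simp_rw [sq, sum_mul_sum]
  rw [integral_finsetSum _ fun i _ => integrable_finsetSum _ fun j _ => hint i j]
  exact sum_congr rfl fun i _ => integral_finsetSum _ fun j _ => hint i j

theorem integral_sq_sum_le_of_abs_integral_mul_le {Y : Type*} [MeasurableSpace Y] {μ : Measure Y}
    {f : ℕ → Y → ℝ} (hf : ∀ i, MemLp (f i) 2 μ) {C r : ℝ} (hC : 0 ≤ C) (h0 : 0 ≤ r) (h1 : r < 1)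
    (hcorr : ∀ i j, i ≤ j → |∫ y, f i y * f j y ∂μ| ≤ C * r ^ min i (j - i)) (s : Finset ℕ) :
    ∫ y, (∑ i ∈ s, f i y) ^ 2 ∂μ ≤ 4 * C * #s / (1 - r) := by
  have hcorr_symm : ∀ i j, |∫ y, f i y * f j y ∂μ| ≤ C * (r ^ i + r ^ j + r ^ Nat.dist i j) := by
    intro i j
    rcases le_total i j with hij | hji
    · exact (hcorr i j hij).trans <| by gcongr; exact pow_min_le_pow_add_pow_add_pow_dist h0 hij
    · simp_rw [mul_comm (f i _)]
      refine (hcorr j i hji).trans ?_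
      rw [add_comm (r ^ i), Nat.dist_comm]
      gcongr
      exact pow_min_le_pow_add_pow_add_pow_dist h0 hji
  calc ∫ y, (∑ i ∈ s, f i y) ^ 2 ∂μ
      = ∑ i ∈ s, ∑ j ∈ s, ∫ y, f i y * f j y ∂μ := integral_sq_sum_eq_sum_sum_integral_mul hf s
    _ ≤ ∑ i ∈ s, ∑ j ∈ s, C * (r ^ i + r ^ j + r ^ Nat.dist i j) :=
        sum_le_sum fun i _ => sum_le_sum fun j _ => (le_abs_self _).trans (hcorr_symm i j)
    _ = C * (#s * ∑ i ∈ s, r ^ i + #s * ∑ j ∈ s, r ^ j + ∑ i ∈ s, ∑ j ∈ s, r ^ Nat.dist i j) := by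
        simp_rw [← mul_sum, sum_add_distrib, sum_const, nsmul_eq_mul, ← mul_sum]
    _ ≤ C * (#s * (1 - r)⁻¹ + #s * (1 - r)⁻¹ + ∑ _i ∈ s, 2 * (1 - r)⁻¹) := by
        gcongr with i
        · exact sum_pow_le_inv_one_sub h0 h1 s
        · exact sum_pow_le_inv_one_sub h0 h1 s
        · exact sum_pow_dist_le h0 h1 s i
    _ = 4 * C * #s / (1 - r) := by rw [sum_const, nsmul_eq_mul]; ring

theorem dyadic_sum_integral_sq_le_of_correlation_bound_general
    {Y : Type*} [MeasurableSpace Y] (ν : Measure Y)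
    (q C δ : ℝ) (hq : 1 < q) (hC : 0 < C) (hδ : 0 < δ)
    (F : Y → ℕ → ℝ)
    (hFL2 : ∀ i : ℕ, MemLp (fun y => F y i) 2 ν)
    (hcorr : ∀ i j : ℕ, i ≤ j →
      |∫ y, F y i * F y j ∂ν| ≤ C * q ^ (-(δ * ((min i (j - i) : ℕ) : ℝ))))
    (s : ℕ) :
    ∑ k ∈ Finset.range s, ∑ l ∈ Finset.range (2 ^ (s - k)),
        ∫ y, (∑ i ∈ Finset.Ico (2 ^ k * l) (2 ^ k * (l + 1)), F y i) ^ 2 ∂ν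
      ≤ 4 * C * (s : ℝ) * (2 : ℝ) ^ s / (1 - q ^ (-δ)) := by
  set r := q ^ (-δ)
  have h0 : 0 ≤ r := Real.rpow_nonneg (by linarith) _
  have h1 : r < 1 := Real.rpow_lt_one_of_one_lt_of_neg hq (by linarith)
  have hcorr_pow : ∀ i j, i ≤ j → |∫ y, F y i * F y j ∂ν| ≤ C * r ^ min i (j - i) := by
    intro i j hij
    rw [← Real.rpow_natCast, ← Real.rpow_mul (by linarith), neg_mul]
    exact hcorr i j hij
  have hlevel : ∀ k ∈ range s, ∑ l ∈ range (2 ^ (s - k)),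
      ∫ y, (∑ i ∈ Ico (2 ^ k * l) (2 ^ k * (l + 1)), F y i) ^ 2 ∂ν ≤ 4 * C * 2 ^ s / (1 - r) := by
    intro k hk
    have hcard : ∀ l, #(Ico (2 ^ k * l) (2 ^ k * (l + 1))) = 2 ^ k := fun l => by
      rw [Nat.card_Ico, mul_add_one, Nat.add_sub_cancel_left]
    calc _ ≤ ∑ _l ∈ range (2 ^ (s - k)), 4 * C * 2 ^ k / (1 - r) := sum_le_sum fun l _ => by
          simpa [hcard] using integral_sq_sum_le_of_abs_integral_mul_le (f := fun i y => F y i)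
            hFL2 hC.le h0 h1 hcorr_pow (Ico (2 ^ k * l) (2 ^ k * (l + 1)))
      _ = 4 * C * 2 ^ s / (1 - r) := by
        rw [sum_const, card_range, nsmul_eq_mul, ← Nat.sub_add_cancel (mem_range.1 hk).le,
          pow_add, Nat.add_sub_cancel]
        push_cast
        ring
  calc _ ≤ ∑ _k ∈ range s, 4 * C * 2 ^ s / (1 - r) := sum_le_sum hlevel
    _ = _ := by rw [sum_const, card_range, nsmul_eq_mul]; ring

/-- under the correlation bound of Lemma 3.6, summing the second-moment
bounds over the dyadic family `L_s` of intervals `[2^k·l, 2^k(l+1))` with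
`0 ≤ k ≤ s−1`, `0 ≤ l ≤ 2^{s−k}−1`, gives
`Σ_{[b,c) ∈ L_s} ∫_Y (Σ_{i=b}^{c−1} F(y,i))² dν ≤ 4C·s·2^s/(1−q^{−δ})`. -/
theorem dyadic_sum_integral_sq_le_of_correlation_bound
    {Y : Type*} [MeasurableSpace Y] (ν : Measure Y) [IsProbabilityMeasure ν]
    (q C δ : ℝ) (hq : 1 < q) (hC : 0 < C) (hδ : 0 < δ)
    (F : Y → ℕ → ℝ) (hFmeas : ∀ i : ℕ, Measurable fun y => F y i)
    (hFL2 : ∀ i : ℕ, MemLp (fun y => F y i) 2 ν)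
    (hcorr : ∀ i j : ℕ, i ≤ j →
      |∫ y, F y i * F y j ∂ν| ≤ C * q ^ (-(δ * ((min i (j - i) : ℕ) : ℝ))))
    (s : ℕ) :
    ∑ k ∈ Finset.range s, ∑ l ∈ Finset.range (2 ^ (s - k)),
        ∫ y, (∑ i ∈ Finset.Ico (2 ^ k * l) (2 ^ k * (l + 1)), F y i) ^ 2 ∂ν
      ≤ 4 * C * (s : ℝ) * (2 : ℝ) ^ s / (1 - q ^ (-δ)) :=
  dyadic_sum_integral_sq_le_of_correlation_bound_general ν q C δ hq hC hδ F hFL2 hcorr s
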